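/- (Scaled mean-oscillation recursion) Let f ∈ L²_t H¹_x on Q_{1/2} and define H̃(f;r) = (1/r³)∬_{Q_r}|f − [f]_{B_r}|² dx dt and E(f;r) = (1/r)∬_{Q_r}|∇f|² dx dt. Then there exist a universal constant c₀ and θ₀ ∈ (0,1/2] such that for every θ ∈ (0,θ₀] and r ∈ (0,1/2): H̃(f;θr) ≤ c₀θ² H̃(f;r) + c₀[θ² + (1+θ)²/θ³] E(f;r). -/

import Mathlib

/-!
At each time slice the L² Poincaré inequality on `B_{θr}` gives
`∫_{B_{θr}} |f - [f]_{B_{θr}}|² ≤ 32 (θr)² ∫_{B_r} |∇f|²`; integrating over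
`(-(θr)², 0) ⊆ (-r², 0)` and dividing by `(θr)³` yields `H̃(f;θr) ≤ (32/θ) E(f;r)`, which is
stronger than the recursion because `1/θ ≤ (1+θ)²/θ³`.

The Poincaré inequality on a ball of radius `ρ` in dimension `n`, with constant `2^(n+2) ρ²`,
comes from `|u x - u y|² ≤ |x - y|² ∫₀¹ |∇u(y + s(x - y))|² ds` averaged over `x, y` in the ball.
-/

open MeasureTheory Metric Set

noncomputable section

abbrev E3 := EuclideanSpace ℝ (Fin 3)

/-- The scaled mean-oscillation quantity `H̃(f;r) = (1/r³)∬_{Q_r}|f−[f]_{B_r}|²`. -/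
def Htilde (f : ℝ → E3 → E3) (r : ℝ) : ℝ :=
  (1/r^3) * ∫ t in Ioo (-(r^2)) (0:ℝ), ∫ x in ball (0:E3) r,
    ‖f t x - ⨍ y in ball (0:E3) r, f t y‖^2

/-- The scaled energy `E(f;r) = (1/r)∬_{Q_r}|∇f|²`. -/
def Escaled (f : ℝ → E3 → E3) (r : ℝ) : ℝ :=
  (1/r) * ∫ t in Ioo (-(r^2)) (0:ℝ), ∫ x in ball (0:E3) r, ‖fderiv ℝ (f t) x‖^2

open Module
open scoped ENNReal

theorem lintegral_sq_le_measure_univ_mul {α : Type*} [MeasurableSpace α] (μ : Measure α)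
    {g : α → ℝ≥0∞} (hg : AEMeasurable g μ) :
    (∫⁻ a, g a ∂μ) ^ 2 ≤ μ univ * ∫⁻ a, g a ^ 2 ∂μ := by
  have key : ∀ x : ℝ≥0∞, (x ^ (1 / 2 : ℝ)) ^ 2 = x := fun x => by
    rw [← ENNReal.rpow_natCast, ← ENNReal.rpow_mul]; norm_num
  have hCS := ENNReal.lintegral_mul_le_Lp_mul_Lq μ Real.HolderConjugate.two_two hg
    aemeasurable_const (g := fun _ => 1)
  simp only [Pi.mul_apply, mul_one, lintegral_const, ENNReal.rpow_two, one_pow, one_mul] at hCS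
  calc (∫⁻ a, g a ∂μ) ^ 2
      ≤ ((∫⁻ a, g a ^ 2 ∂μ) ^ (1 / 2 : ℝ) * μ univ ^ (1 / 2 : ℝ)) ^ 2 := by gcongr
    _ = μ univ * ∫⁻ a, g a ^ 2 ∂μ := by rw [mul_pow, key, key, mul_comm]

section Average

variable {α F : Type*} [MeasurableSpace α] [NormedAddCommGroup F] [NormedSpace ℝ F]

theorem enorm_average_sq_le_laverage {μ : Measure α} {g : α → F}
    (hg : AEStronglyMeasurable g μ) : ‖⨍ a, g a ∂μ‖ₑ ^ 2 ≤ ⨍⁻ a, ‖g a‖ₑ ^ 2 ∂μ := by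
  set ν := (μ univ)⁻¹ • μ
  have hν : ν univ ≤ 1 := by
    simp only [ν, Measure.smul_apply, smul_eq_mul]
    exact ENNReal.inv_mul_le_one _
  calc ‖⨍ a, g a ∂μ‖ₑ ^ 2 ≤ (∫⁻ a, ‖g a‖ₑ ∂ν) ^ 2 := by
        gcongr; exact enorm_integral_le_lintegral_enorm _
    _ ≤ ν univ * ∫⁻ a, ‖g a‖ₑ ^ 2 ∂ν :=
        lintegral_sq_le_measure_univ_mul ν (hg.smul_measure _).enorm
    _ ≤ ⨍⁻ a, ‖g a‖ₑ ^ 2 ∂μ := by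
        rw [laverage_eq']; exact mul_le_of_le_one_left' hν

theorem enorm_sub_setAverage_sq_le [CompleteSpace F] {μ : Measure α} {s : Set α}
    (hs₀ : μ s ≠ 0) (hs : μ s ≠ ∞) {u : α → F} (hu : IntegrableOn u s μ) (a : F) :
    ‖a - ⨍ y in s, u y ∂μ‖ₑ ^ 2 ≤ ⨍⁻ y in s, ‖a - u y‖ₑ ^ 2 ∂μ := by
  have hconst : IntegrableOn (fun _ => a) s μ := integrableOn_const hs
  have hmean : a - ⨍ y in s, u y ∂μ = ⨍ y in s, (a - u y) ∂μ := by
    rw [setAverage_eq, setAverage_eq, integral_sub hconst hu, smul_sub, setIntegral_const,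
      smul_smul, inv_mul_cancel₀ (measureReal_ne_zero_iff hs |>.mpr hs₀), one_smul]
  rw [hmean]
  exact enorm_average_sq_le_laverage (hconst.sub hu).aestronglyMeasurable

end Average

theorem integral_norm_sq_eq_toReal_lintegral {α G : Type*} [MeasurableSpace α]
    [NormedAddCommGroup G] {μ : Measure α} {g : α → G} (hg : AEMeasurable (fun a => ‖g a‖) μ) :
    ∫ a, ‖g a‖ ^ 2 ∂μ = (∫⁻ a, ‖g a‖ₑ ^ 2 ∂μ).toReal := by
  rw [integral_eq_lintegral_of_nonneg_ae (f := fun a => ‖g a‖ ^ 2)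
    (ae_of_all _ fun _ => by positivity) (hg.pow_const 2).aestronglyMeasurable]
  congr 1
  refine lintegral_congr fun a => ?_
  rw [← ofReal_norm, ← ENNReal.ofReal_pow (norm_nonneg _)]

section Segment

variable {E F : Type*} [NormedAddCommGroup E] [NormedSpace ℝ E]
  [NormedAddCommGroup F] [NormedSpace ℝ F] [CompleteSpace F]

theorem enorm_sub_le_lintegral_enorm_deriv {γ : ℝ → F} {a b : ℝ} (hab : a ≤ b)
    (hγ : ∀ s ∈ Icc a b, DifferentiableAt ℝ γ s) :
    ‖γ b - γ a‖ₑ ≤ ∫⁻ s in Ioo a b, ‖deriv γ s‖ₑ := by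
  by_cases htop : ∫⁻ s in Ioo a b, ‖deriv γ s‖ₑ = ∞
  · simp [htop]
  have hint : IntegrableOn (deriv γ) (Ioo a b) :=
    ⟨(stronglyMeasurable_deriv γ).aestronglyMeasurable, lt_top_iff_ne_top.2 htop⟩
  have hFTC := intervalIntegral.integral_eq_sub_of_hasDerivAt
    (fun s hs => (hγ s (by rwa [uIcc_of_le hab] at hs)).hasDerivAt)
    ((intervalIntegrable_iff_integrableOn_Ioo_of_le hab).2 hint)
  rw [← hFTC, intervalIntegral.integral_of_le hab, ← restrict_Ioo_eq_restrict_Ioc]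
  exact enorm_integral_le_lintegral_enorm _

theorem enorm_sub_sq_le_lintegral_fderiv_segment {u : E → F} {x y : E}
    (hu : ∀ s ∈ Icc (0 : ℝ) 1, DifferentiableAt ℝ u (y + s • (x - y))) :
    ‖u x - u y‖ₑ ^ 2 ≤
      ‖x - y‖ₑ ^ 2 * ∫⁻ s in Ioo (0 : ℝ) 1, ‖fderiv ℝ u (y + s • (x - y))‖ₑ ^ 2 := by
  set γ : ℝ → F := fun s => u (y + s • (x - y))
  have hγ : ∀ s ∈ Icc (0 : ℝ) 1, HasDerivAt γ (fderiv ℝ u (y + s • (x - y)) (x - y)) s :=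
    fun s hs => (hu s hs).hasFDerivAt.comp_hasDerivAt s
      (by simpa using ((hasDerivAt_id s).smul_const (x - y)).const_add y)
  have hderiv : ∀ s ∈ Ioo (0 : ℝ) 1,
      ‖deriv γ s‖ₑ ^ 2 ≤ ‖x - y‖ₑ ^ 2 * ‖fderiv ℝ u (y + s • (x - y))‖ₑ ^ 2 := fun s hs => by
    rw [(hγ s (Ioo_subset_Icc_self hs)).deriv, ← mul_pow, mul_comm]
    gcongr
    exact ContinuousLinearMap.le_opENorm _ _
  calc ‖u x - u y‖ₑ ^ 2 = ‖γ 1 - γ 0‖ₑ ^ 2 := by simp [γ]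
    _ ≤ (∫⁻ s in Ioo (0 : ℝ) 1, ‖deriv γ s‖ₑ) ^ 2 := by
        gcongr
        exact enorm_sub_le_lintegral_enorm_deriv zero_le_one fun s hs => (hγ s hs).differentiableAt
    _ ≤ volume (Ioo (0 : ℝ) 1) * ∫⁻ s in Ioo (0 : ℝ) 1, ‖deriv γ s‖ₑ ^ 2 := by
        simpa using lintegral_sq_le_measure_univ_mul (volume.restrict (Ioo (0 : ℝ) 1))
          (stronglyMeasurable_deriv γ).aestronglyMeasurable.enorm
    _ ≤ ∫⁻ s in Ioo (0 : ℝ) 1, ‖x - y‖ₑ ^ 2 * ‖fderiv ℝ u (y + s • (x - y))‖ₑ ^ 2 := by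
        rw [Real.volume_Ioo, sub_zero, ENNReal.ofReal_one, one_mul]
        exact setLIntegral_mono' measurableSet_Ioo hderiv
    _ = _ := lintegral_const_mul' _ _ (by simp)

end Segment

section Haar

variable {E : Type*} [NormedAddCommGroup E] [NormedSpace ℝ E] [FiniteDimensional ℝ E]
  [MeasurableSpace E] [BorelSpace E] (μ : Measure E) [μ.IsAddHaarMeasure]

theorem lintegral_comp_add_smul {g : E → ℝ≥0∞} (hg : Measurable g) (a : E) {t : ℝ}
    (ht : t ≠ 0) :
    ∫⁻ y, g (a + t • y) ∂μ = ENNReal.ofReal |(t ^ finrank ℝ E)⁻¹| * ∫⁻ z, g z ∂μ := by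
  rw [← lintegral_map (f := fun z => g (a + z)) (by fun_prop) (measurable_const_smul t),
    Measure.map_addHaar_smul μ ht, lintegral_smul_measure, lintegral_add_left_eq_self,
    smul_eq_mul]

theorem lintegral_setLIntegral_ball {g : E → ℝ≥0∞} (hg : Measurable g) (R : ℝ) :
    ∫⁻ x, ∫⁻ z in ball x R, g z ∂μ ∂μ = μ (ball 0 R) * ∫⁻ z, g z ∂μ := by
  have hind : ∀ x z, (ball x R).indicator g z = (ball z R).indicator (fun _ => g z) x := by
    classical
    intro x z
    simp only [indicator_apply, mem_ball_comm]
  have hmeas : Measurable fun p : E × E => (ball p.1 R).indicator g p.2 := by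
    have : MeasurableSet {p : E × E | dist p.2 p.1 < R} :=
      (isOpen_lt (by fun_prop) continuous_const).measurableSet
    exact (hg.comp measurable_snd).indicator this
  simp_rw [← lintegral_indicator measurableSet_ball]
  rw [lintegral_lintegral_swap hmeas.aemeasurable,
    ← lintegral_const_mul' _ _ measure_ball_lt_top.ne]
  refine lintegral_congr fun z => ?_
  simp_rw [hind _ z]
  rw [lintegral_indicator_const measurableSet_ball, Measure.addHaar_ball_center, mul_comm]

/-- For fixed `x`, substituting `z = y + s (x - y)` costs a Jacobian `(1 - s)⁻ⁿ`, but `z` then lies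
in `ball x (2 (1 - s) ρ)`, whose volume gives the factor `(1 - s)ⁿ` back: the bound is uniform
in `s`. -/
theorem lintegral_ball_ball_sq_mul_comp_le {g : E → ℝ≥0∞} (hg : Measurable g) (c : E) (ρ : ℝ)
    {s : ℝ} (hs : s < 1) :
    ∫⁻ x in ball c ρ, ∫⁻ y in ball c ρ, ‖x - y‖ₑ ^ 2 * g (y + s • (x - y)) ∂μ ∂μ ≤
      ENNReal.ofReal (2 ^ (finrank ℝ E + 2) * ρ ^ 2) * μ (ball c ρ) * ∫⁻ z, g z ∂μ := by
  set n := finrank ℝ E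
  set τ := 1 - s
  have hτ : 0 < τ := sub_pos.2 hs
  set R := 2 * τ * ρ
  have hpt : ∀ x ∈ ball c ρ, ∀ y ∈ ball c ρ, ‖x - y‖ₑ ^ 2 * g (y + s • (x - y)) ≤
      ENNReal.ofReal ((2 * ρ) ^ 2) * (ball x R).indicator g (s • x + τ • y) := by
    intro x hx y hy
    have hxy : dist x y < 2 * ρ := by
      linarith [dist_triangle_right x y c, mem_ball.1 hx, mem_ball.1 hy]
    have hline : y + s • (x - y) = s • x + τ • y := by simp only [τ]; module
    have hmem : s • x + τ • y ∈ ball x R := by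
      rw [mem_ball, dist_eq_norm, show s • x + τ • y - x = τ • (y - x) by simp only [τ]; module,
        norm_smul, Real.norm_eq_abs, abs_of_pos hτ, ← dist_eq_norm, dist_comm]
      simp only [R]; nlinarith
    rw [hline, indicator_of_mem hmem]
    gcongr
    rw [← ofReal_norm, ← ENNReal.ofReal_pow (norm_nonneg _), ← dist_eq_norm]
    gcongr
  calc ∫⁻ x in ball c ρ, ∫⁻ y in ball c ρ, ‖x - y‖ₑ ^ 2 * g (y + s • (x - y)) ∂μ ∂μ
      ≤ ∫⁻ x, ENNReal.ofReal ((2 * ρ) ^ 2) *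
          ∫⁻ y, (ball x R).indicator g (s • x + τ • y) ∂μ ∂μ := by
        refine (setLIntegral_le_lintegral _ _).trans'
          (setLIntegral_mono' measurableSet_ball fun x hx => ?_)
        rw [← lintegral_const_mul' _ _ ENNReal.ofReal_ne_top]
        exact (setLIntegral_mono' measurableSet_ball (hpt x hx)).trans
          (setLIntegral_le_lintegral _ _)
    _ = ENNReal.ofReal ((2 * ρ) ^ 2) * ENNReal.ofReal |(τ ^ n)⁻¹| *
          ∫⁻ x, ∫⁻ z in ball x R, g z ∂μ ∂μ := by
        simp_rw [lintegral_comp_add_smul μ (hg.indicator measurableSet_ball) _ hτ.ne',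
          lintegral_indicator measurableSet_ball, ← mul_assoc]
        exact lintegral_const_mul' _ _
          (ENNReal.mul_ne_top ENNReal.ofReal_ne_top ENNReal.ofReal_ne_top)
    _ = ENNReal.ofReal (2 ^ (n + 2) * ρ ^ 2) * μ (ball c ρ) * ∫⁻ z, g z ∂μ := by
        rw [lintegral_setLIntegral_ball μ hg, Measure.addHaar_ball_mul_of_pos μ 0 (by positivity),
          Measure.addHaar_ball_center μ c]
        have hconst : (2 * ρ) ^ 2 * |(τ ^ n)⁻¹| * (2 * τ) ^ n = 2 ^ (n + 2) * ρ ^ 2 := by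
          rw [abs_of_pos (by positivity), mul_pow 2 τ, pow_add]
          field_simp
        rw [← hconst, ENNReal.ofReal_mul (by positivity), ENNReal.ofReal_mul (by positivity)]
        ring

variable {F : Type*} [NormedAddCommGroup F] [NormedSpace ℝ F] [CompleteSpace F]

theorem lintegral_enorm_sub_setAverage_sq_le {u : E → F} {c : E} {ρ : ℝ} (hρ : 0 < ρ)
    (hd : ∀ x ∈ ball c ρ, DifferentiableAt ℝ u x) (hu : IntegrableOn u (ball c ρ) μ) :
    ∫⁻ x in ball c ρ, ‖u x - ⨍ y in ball c ρ, u y ∂μ‖ₑ ^ 2 ∂μ ≤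
      ENNReal.ofReal (2 ^ (finrank ℝ E + 2) * ρ ^ 2) *
        ∫⁻ x in ball c ρ, ‖fderiv ℝ u x‖ₑ ^ 2 ∂μ := by
  set B := ball c ρ
  set C := ENNReal.ofReal (2 ^ (finrank ℝ E + 2) * ρ ^ 2)
  set G : E → ℝ≥0∞ := B.indicator fun z => ‖fderiv ℝ u z‖ₑ ^ 2
  have hG : Measurable G :=
    ((measurable_fderiv ℝ u).enorm.pow_const 2).indicator measurableSet_ball
  have hB₀ : μ B ≠ 0 := (measure_ball_pos μ c hρ).ne'
  have hB : μ B ≠ ∞ := measure_ball_lt_top.ne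
  set Φ : ℝ → E → E → ℝ≥0∞ := fun s x y => ‖x - y‖ₑ ^ 2 * G (y + s • (x - y))
  have hpair : ∀ x ∈ B, ∀ y ∈ B, ‖u x - u y‖ₑ ^ 2 ≤ ∫⁻ s in Ioo (0 : ℝ) 1, Φ s x y := by
    intro x hx y hy
    have hseg : ∀ s ∈ Icc (0 : ℝ) 1, y + s • (x - y) ∈ B := fun s hs =>
      (convex_ball c ρ).add_smul_sub_mem hy hx hs
    rw [lintegral_const_mul' _ _ (ENNReal.pow_ne_top enorm_ne_top)]
    refine (enorm_sub_sq_le_lintegral_fderiv_segment fun s hs => hd _ (hseg s hs)).trans_eq ?_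
    congr 1
    exact setLIntegral_congr_fun measurableSet_Ioo fun s hs =>
      (indicator_of_mem (hseg s (Ioo_subset_Icc_self hs)) fun z => ‖fderiv ℝ u z‖ₑ ^ 2).symm
  calc ∫⁻ x in B, ‖u x - ⨍ y in B, u y ∂μ‖ₑ ^ 2 ∂μ
      ≤ ∫⁻ x in B, (μ B)⁻¹ * ∫⁻ y in B, (∫⁻ s in Ioo (0 : ℝ) 1, Φ s x y) ∂μ ∂μ := by
        refine setLIntegral_mono' measurableSet_ball fun x hx => ?_
        refine (enorm_sub_setAverage_sq_le hB₀ hB hu _).trans ?_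
        rw [setLAverage_eq, ENNReal.div_eq_inv_mul]
        exact mul_le_mul_right (setLIntegral_mono' measurableSet_ball (hpair x hx)) _
    _ = (μ B)⁻¹ * ∫⁻ s in Ioo (0 : ℝ) 1, ∫⁻ x in B, ∫⁻ y in B, Φ s x y ∂μ ∂μ := by
        rw [lintegral_const_mul' _ _ (ENNReal.inv_ne_top.2 hB₀)]
        congr 1
        calc ∫⁻ x in B, ∫⁻ y in B, (∫⁻ s in Ioo (0 : ℝ) 1, Φ s x y) ∂μ ∂μ
            = ∫⁻ x in B, (∫⁻ s in Ioo (0 : ℝ) 1, ∫⁻ y in B, Φ s x y ∂μ) ∂μ :=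
              lintegral_congr fun x => lintegral_lintegral_swap (by simp only [Φ]; fun_prop)
          _ = _ := lintegral_lintegral_swap (Measurable.lintegral_prod_right'
              (f := fun q : (E × ℝ) × E => Φ q.1.2 q.1.1 q.2)
              (by simp only [Φ]; fun_prop)).aemeasurable
    _ ≤ (μ B)⁻¹ * ∫⁻ s in Ioo (0 : ℝ) 1, C * μ B * ∫⁻ z, G z ∂μ :=
        mul_le_mul_right (setLIntegral_mono' measurableSet_Ioo fun s hs =>
          lintegral_ball_ball_sq_mul_comp_le μ hG c ρ hs.2) _
    _ = C * ∫⁻ x in B, ‖fderiv ℝ u x‖ₑ ^ 2 ∂μ := by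
        rw [setLIntegral_const, Real.volume_Ioo, sub_zero, ENNReal.ofReal_one, mul_one,
          lintegral_indicator measurableSet_ball, mul_comm C, mul_assoc, ← mul_assoc,
          ENNReal.inv_mul_cancel hB₀ hB, one_mul]

theorem setIntegral_norm_sub_setAverage_sq_le {u : E → F} {c : E} {ρ : ℝ} (hρ : 0 < ρ)
    (hd : ∀ x ∈ ball c ρ, DifferentiableAt ℝ u x) (hu : IntegrableOn u (ball c ρ) μ)
    (hDu : IntegrableOn (fun x => ‖fderiv ℝ u x‖ ^ 2) (ball c ρ) μ) :
    ∫ x in ball c ρ, ‖u x - ⨍ y in ball c ρ, u y ∂μ‖ ^ 2 ∂μ ≤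
      2 ^ (finrank ℝ E + 2) * ρ ^ 2 * ∫ x in ball c ρ, ‖fderiv ℝ u x‖ ^ 2 ∂μ := by
  have hfin : ∫⁻ x in ball c ρ, ‖fderiv ℝ u x‖ₑ ^ 2 ∂μ ≠ ∞ := by
    simpa [HasFiniteIntegral, enorm_pow] using hDu.hasFiniteIntegral.ne
  have hmeas : AEStronglyMeasurable (fun x => u x - ⨍ y in ball c ρ, u y ∂μ)
      (μ.restrict (ball c ρ)) :=
    hu.aestronglyMeasurable.sub aestronglyMeasurable_const
  rw [integral_norm_sq_eq_toReal_lintegral hmeas.norm.aemeasurable,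
    integral_norm_sq_eq_toReal_lintegral (measurable_fderiv ℝ u).norm.aemeasurable,
    ← ENNReal.toReal_ofReal (by positivity : (0 : ℝ) ≤ 2 ^ (finrank ℝ E + 2) * ρ ^ 2),
    ← ENNReal.toReal_mul]
  exact ENNReal.toReal_mono (ENNReal.mul_ne_top ENNReal.ofReal_ne_top hfin)
    (lintegral_enorm_sub_setAverage_sq_le μ hρ hd hu)

end Haar

theorem Htilde_nonneg (f : ℝ → E3 → E3) {r : ℝ} (hr : 0 ≤ r) : 0 ≤ Htilde f r :=
  mul_nonneg (by positivity) (setIntegral_nonneg measurableSet_Ioo fun _ _ =>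
    setIntegral_nonneg measurableSet_ball fun _ _ => by positivity)

theorem Escaled_nonneg (f : ℝ → E3 → E3) {r : ℝ} (hr : 0 ≤ r) : 0 ≤ Escaled f r :=
  mul_nonneg (by positivity) (setIntegral_nonneg measurableSet_Ioo fun _ _ =>
    setIntegral_nonneg measurableSet_ball fun _ _ => by positivity)

theorem Htilde_mul_le_Escaled {f : ℝ → E3 → E3} {θ r : ℝ} (hθ : 0 < θ) (hθ₁ : θ ≤ 1)
    (hr : 0 < r)
    (hd : ∀ t ∈ Ioo (-(r ^ 2)) 0, ∀ x ∈ ball (0 : E3) r, DifferentiableAt ℝ (f t) x)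
    (hf : ∀ t ∈ Ioo (-(r ^ 2)) 0, IntegrableOn (f t) (ball (0 : E3) r))
    (hDf : ∀ t ∈ Ioo (-(r ^ 2)) 0,
      IntegrableOn (fun x => ‖fderiv ℝ (f t) x‖ ^ 2) (ball (0 : E3) r))
    (hE : IntegrableOn (fun t => ∫ x in ball (0 : E3) r, ‖fderiv ℝ (f t) x‖ ^ 2)
      (Ioo (-(r ^ 2)) 0)) :
    Htilde f (θ * r) ≤ 32 / θ * Escaled f r := by
  set ρ := θ * r
  have hρ : 0 < ρ := mul_pos hθ hr
  have hρr : ρ ≤ r := mul_le_of_le_one_left hr.le hθ₁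
  have hI : Ioo (-(ρ ^ 2)) 0 ⊆ Ioo (-(r ^ 2)) 0 := fun t ht =>
    ⟨by nlinarith [ht.1], ht.2⟩
  have hB : ball (0 : E3) ρ ⊆ ball 0 r := ball_subset_ball hρr
  have hslice : ∀ t ∈ Ioo (-(ρ ^ 2)) 0,
      ∫ x in ball (0 : E3) ρ, ‖f t x - ⨍ y in ball (0 : E3) ρ, f t y‖ ^ 2 ≤
        32 * ρ ^ 2 * ∫ x in ball (0 : E3) r, ‖fderiv ℝ (f t) x‖ ^ 2 := by
    intro t ht
    have hP := setIntegral_norm_sub_setAverage_sq_le volume hρ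
      (fun x hx => hd t (hI ht) x (hB hx)) ((hf t (hI ht)).mono_set hB)
      ((hDf t (hI ht)).mono_set hB)
    rw [finrank_euclideanSpace_fin, show (2 : ℝ) ^ (3 + 2) = 32 by norm_num] at hP
    exact hP.trans (mul_le_mul_of_nonneg_left (setIntegral_mono_set (hDf t (hI ht))
      (ae_of_all _ fun _ => by positivity) hB.eventuallyLE) (by positivity))
  have henergy : ∀ t, 0 ≤ ∫ x in ball (0 : E3) r, ‖fderiv ℝ (f t) x‖ ^ 2 := fun t =>
    setIntegral_nonneg measurableSet_ball fun _ _ => by positivity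
  calc Htilde f ρ
      ≤ 1 / ρ ^ 3 * ∫ t in Ioo (-(ρ ^ 2)) 0,
          32 * ρ ^ 2 * ∫ x in ball (0 : E3) r, ‖fderiv ℝ (f t) x‖ ^ 2 := by
        refine mul_le_mul_of_nonneg_left (integral_mono_of_nonneg ?_
          ((hE.mono_set hI).const_mul _)
          ((ae_restrict_iff' measurableSet_Ioo).2 (ae_of_all _ hslice))) (by positivity)
        exact ae_of_all _ fun _ => setIntegral_nonneg measurableSet_ball fun _ _ => by positivity
    _ ≤ 1 / ρ ^ 3 * (32 * ρ ^ 2 * ∫ t in Ioo (-(r ^ 2)) 0,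
          ∫ x in ball (0 : E3) r, ‖fderiv ℝ (f t) x‖ ^ 2) := by
        rw [integral_const_mul]
        gcongr ?_ * (?_ * ?_)
        exact setIntegral_mono_set hE (ae_of_all _ henergy) hI.eventuallyLE
    _ = 32 / θ * Escaled f r := by
        simp only [Escaled, ρ]
        field_simp

/-- Inequality (2.21): scaled mean-oscillation recursion. There are universal `c₀` and
`θ₀ ∈ (0,1/2]` such that `H̃(f;θr) ≤ c₀θ² H̃(f;r) + c₀[θ² + (1+θ)²/θ³] E(f;r)` for all
`θ ∈ (0,θ₀]`, `r ∈ (0,1/2)`. -/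
theorem stmt_10 :
    ∃ c₀ : ℝ, 0 < c₀ ∧ ∃ θ₀ ∈ Ioc (0:ℝ) (1/2), ∀ f : ℝ → E3 → E3,
      (∀ t ∈ Ioo (-(1/4:ℝ)) (0:ℝ), ∀ x ∈ ball (0:E3) (1/2), DifferentiableAt ℝ (f t) x) →
      (∀ t ∈ Ioo (-(1/4:ℝ)) (0:ℝ), IntegrableOn (f t) (ball (0:E3) (1/2))) →
      (∀ t ∈ Ioo (-(1/4:ℝ)) (0:ℝ), IntegrableOn (fun x => ‖f t x‖^2) (ball (0:E3) (1/2))) →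
      (∀ t ∈ Ioo (-(1/4:ℝ)) (0:ℝ),
        IntegrableOn (fun x => ‖fderiv ℝ (f t) x‖^2) (ball (0:E3) (1/2))) →
      (∀ s ∈ Ioc (0:ℝ) (1/2), IntegrableOn
        (fun t => ∫ x in ball (0:E3) s, ‖f t x - ⨍ y in ball (0:E3) s, f t y‖^2)
        (Ioo (-(s^2)) (0:ℝ))) →
      (∀ s ∈ Ioc (0:ℝ) (1/2), IntegrableOn
        (fun t => ∫ x in ball (0:E3) s, ‖fderiv ℝ (f t) x‖^2) (Ioo (-(s^2)) (0:ℝ))) →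
      ∀ θ ∈ Ioc (0:ℝ) θ₀, ∀ r ∈ Ioo (0:ℝ) (1/2),
        Htilde f (θ*r) ≤ c₀ * θ^2 * Htilde f r + c₀ * (θ^2 + (1+θ)^2/θ^3) * Escaled f r := by
  refine ⟨32, by norm_num, 1 / 2, ⟨by norm_num, le_rfl⟩, ?_⟩
  intro f hd hf _ hDf _ hE θ ⟨hθ, hθ₀⟩ r ⟨hr, hr₀⟩
  have hQ : Ioo (-(r ^ 2)) 0 ⊆ Ioo (-(1 / 4 : ℝ)) 0 := fun t ht => ⟨by nlinarith [ht.1], ht.2⟩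
  have hB : ball (0 : E3) r ⊆ ball 0 (1 / 2) := ball_subset_ball hr₀.le
  have hcoef : 32 / θ ≤ 32 * (θ ^ 2 + (1 + θ) ^ 2 / θ ^ 3) := by
    have hinv : 1 / θ ≤ (1 + θ) ^ 2 / θ ^ 3 := by
      rw [div_le_div_iff₀ hθ (by positivity)]; nlinarith
    rw [div_eq_mul_one_div]
    nlinarith
  calc Htilde f (θ * r) ≤ 32 / θ * Escaled f r :=
        Htilde_mul_le_Escaled hθ (by linarith) hr (fun t ht x hx => hd t (hQ ht) x (hB hx))
          (fun t ht => (hf t (hQ ht)).mono_set hB) (fun t ht => (hDf t (hQ ht)).mono_set hB)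
          (hE r ⟨hr, hr₀.le⟩)
    _ ≤ 32 * (θ ^ 2 + (1 + θ) ^ 2 / θ ^ 3) * Escaled f r :=
        mul_le_mul_of_nonneg_right hcoef (Escaled_nonneg f hr.le)
    _ ≤ 32 * θ ^ 2 * Htilde f r + 32 * (θ ^ 2 + (1 + θ) ^ 2 / θ ^ 3) * Escaled f r :=
        le_add_of_nonneg_left (mul_nonneg (by positivity) (Htilde_nonneg f hr.le))
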